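/- For every n ≥ 2, the submonoid M_n := φ₃⁻¹(identity) of STVB_n is generated as a monoid by the elements λ_{k,l}, λ̄_{k,l} and z_{k,l} for 1 ≤ k ≠ l ≤ n together with γ_1,…,γ_n. -/

import Mathlib

/-!
Every element of `STVB n` is a product `r * c` of a word `r` in the `ρ_i` and an element `c`
of the submonoid `K` generated by the `λ_{k,l}`, `λ̄_{k,l}`, `z_{k,l}` and `γ_j`. Indeed `K` is
stable under conjugation by each `ρ_m`, which permutes these generators through the
transposition `(m, m+1)` of their indices, and each of `σ_i = λ̄_{i,i+1} ρ_i`,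
`σ̄_i = λ_{i+1,i} ρ_i`, `τ_i`, `γ_j` is an element of `K` times at most one `ρ_i`. Since `φ`
kills `K`, an element `r * c` of the kernel has `φ r = 1`, and then `r = 1` because `φ` is
faithful on the `ρ`'s: a `ρ`-word on the strands `0, …, k + 1` is a `ρ`-word on `0, …, k`
times `ρ_k ⋯ ρ_m`, whose permutation sends `m` to `k + 1`, so `φ r = 1` forces `m = k + 1`,
and one concludes by induction on the number of strands.
-/

namespace SingTVB

/-- Generators of the singular twisted virtual braid monoid `STVB n`
(0-based indexing: `sig i` is the paper's σ_{i+1}, `gam j` is the paper's γ_{j+1}). -/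
inductive Gen (n : ℕ) : Type
  | sig : Fin (n - 1) → Gen n
  | sigb : Fin (n - 1) → Gen n
  | rho : Fin (n - 1) → Gen n
  | tau : Fin (n - 1) → Gen n
  | gam : Fin n → Gen n

abbrev FM (n : ℕ) := FreeMonoid (Gen n)

/-- The strand `i` (lower strand of the `i`-th crossing), as an element of `Fin n`. -/
def fa {n : ℕ} (i : Fin (n - 1)) : Fin n := ⟨i.val, by have := i.isLt; omega⟩
/-- The strand `i+1` (upper strand of the `i`-th crossing), as an element of `Fin n`. -/
def fb {n : ℕ} (i : Fin (n - 1)) : Fin n := ⟨i.val + 1, by have := i.isLt; omega⟩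

def Ws {n : ℕ} (i : Fin (n - 1)) : FM n := FreeMonoid.of (Gen.sig i)
def Wsb {n : ℕ} (i : Fin (n - 1)) : FM n := FreeMonoid.of (Gen.sigb i)
def Wr {n : ℕ} (i : Fin (n - 1)) : FM n := FreeMonoid.of (Gen.rho i)
def Wt {n : ℕ} (i : Fin (n - 1)) : FM n := FreeMonoid.of (Gen.tau i)
def Wg {n : ℕ} (j : Fin n) : FM n := FreeMonoid.of (Gen.gam j)

/-- `|i - j| > 1`. -/
def Far {m : ℕ} (i j : Fin m) : Prop := i.val + 1 < j.val ∨ j.val + 1 < i.val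

/-- Defining relations of the singular twisted virtual braid monoid. -/
inductive Rel (n : ℕ) : FM n → FM n → Prop
  | ss {i j : Fin (n - 1)} (h : Far i j) : Rel n (Ws i * Ws j) (Ws j * Ws i)
  | rr {i j : Fin (n - 1)} (h : Far i j) : Rel n (Wr i * Wr j) (Wr j * Wr i)
  | sr {i j : Fin (n - 1)} (h : Far i j) : Rel n (Ws i * Wr j) (Wr j * Ws i)
  | tt {i j : Fin (n - 1)} (h : Far i j) : Rel n (Wt i * Wt j) (Wt j * Wt i)
  | st {i j : Fin (n - 1)} (h : Far i j) : Rel n (Ws i * Wt j) (Wt j * Ws i)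
  | tr {i j : Fin (n - 1)} (h : Far i j) : Rel n (Wt i * Wr j) (Wr j * Wt i)
  | sss {i j : Fin (n - 1)} (h : j.val = i.val + 1) :
      Rel n (Ws i * Ws j * Ws i) (Ws j * Ws i * Ws j)
  | rrr {i j : Fin (n - 1)} (h : j.val = i.val + 1) :
      Rel n (Wr i * Wr j * Wr i) (Wr j * Wr i * Wr j)
  | rsr {i j : Fin (n - 1)} (h : j.val = i.val + 1) :
      Rel n (Wr i * Ws j * Wr i) (Wr j * Ws i * Wr j)
  | rtr {i j : Fin (n - 1)} (h : j.val = i.val + 1) :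
      Rel n (Wr i * Wt j * Wr i) (Wr j * Wt i * Wr j)
  | sst {i j : Fin (n - 1)} (h : j.val = i.val + 1) :
      Rel n (Ws i * Ws j * Wt i) (Wt j * Ws i * Ws j)
  | sst' {i j : Fin (n - 1)} (h : j.val = i.val + 1) :
      Rel n (Ws j * Ws i * Wt j) (Wt i * Ws j * Ws i)
  | rho2 (i : Fin (n - 1)) : Rel n (Wr i * Wr i) 1
  | ssb (i : Fin (n - 1)) : Rel n (Ws i * Wsb i) 1
  | sbs (i : Fin (n - 1)) : Rel n (Wsb i * Ws i) 1
  | stc (i : Fin (n - 1)) : Rel n (Ws i * Wt i) (Wt i * Ws i)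
  | grel (i : Fin (n - 1)) : Rel n (Wg (fb i) * Wr i) (Wr i * Wg (fa i))
  | rsrg (i : Fin (n - 1)) :
      Rel n (Wr i * Ws i * Wr i) (Wg (fb i) * Wg (fa i) * Ws i * Wg (fa i) * Wg (fb i))
  | rtrg (i : Fin (n - 1)) :
      Rel n (Wr i * Wt i * Wr i) (Wg (fb i) * Wg (fa i) * Wt i * Wg (fa i) * Wg (fb i))
  | g2 (j : Fin n) : Rel n (Wg j * Wg j) 1
  | gg (i j : Fin n) : Rel n (Wg i * Wg j) (Wg j * Wg i)
  | grc {i : Fin (n - 1)} {j : Fin n} (h1 : j ≠ fa i) (h2 : j ≠ fb i) :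
      Rel n (Wg j * Wr i) (Wr i * Wg j)
  | sgc {i : Fin (n - 1)} {j : Fin n} (h1 : j ≠ fa i) (h2 : j ≠ fb i) :
      Rel n (Ws i * Wg j) (Wg j * Ws i)
  | tgc {i : Fin (n - 1)} {j : Fin n} (h1 : j ≠ fa i) (h2 : j ≠ fb i) :
      Rel n (Wt i * Wg j) (Wg j * Wt i)

/-- The singular twisted virtual braid monoid on `n` strands. -/
abbrev STVB (n : ℕ) := PresentedMonoid (Rel n)

def mkS (n : ℕ) : FM n →* STVB n := PresentedMonoid.mk (Rel n)

def sigE (n : ℕ) (i : Fin (n - 1)) : STVB n := mkS n (Ws i)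
def sigbE (n : ℕ) (i : Fin (n - 1)) : STVB n := mkS n (Wsb i)
def rhoE (n : ℕ) (i : Fin (n - 1)) : STVB n := mkS n (Wr i)
def tauE (n : ℕ) (i : Fin (n - 1)) : STVB n := mkS n (Wt i)
def gamE (n : ℕ) (j : Fin n) : STVB n := mkS n (Wg j)

/-- The transposition `(i, i+1)` in the symmetric group on `Fin n`. -/
def swp {n : ℕ} (i : Fin (n - 1)) : Equiv.Perm (Fin n) := Equiv.swap (fa i) (fb i)

end SingTVB
namespace SingTVB

/-- ρ-generator word with a natural-number (0-based) index; junk value `1` out of range. -/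
def WrN (n : ℕ) (k : ℕ) : FM n := if h : k < n - 1 then Wr ⟨k, h⟩ else 1
def WsN (n : ℕ) (k : ℕ) : FM n := if h : k < n - 1 then Ws ⟨k, h⟩ else 1
def WsbN (n : ℕ) (k : ℕ) : FM n := if h : k < n - 1 then Wsb ⟨k, h⟩ else 1
def WtN (n : ℕ) (k : ℕ) : FM n := if h : k < n - 1 then Wt ⟨k, h⟩ else 1

/-- The ascending word `ρ_{i+1} ρ_{i+2} ⋯ ρ_{j-1}` (0-based strand indices `i < j`). -/
def asc (n i j : ℕ) : FM n := ((List.range' (i + 1) (j - 1 - i)).map (WrN n)).prod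
/-- The descending word `ρ_{j-1} ρ_{j-2} ⋯ ρ_{i+1}` (0-based strand indices `i < j`). -/
def desc (n i j : ℕ) : FM n := ((List.range' (i + 1) (j - 1 - i)).reverse.map (WrN n)).prod

/-- The word for the generator `λ_{i,j}` (0-based strands `i ≠ j`), built from
`λ_{i,i+1} = ρ_i σ̄_i` and `λ_{i+1,i} = ρ_i λ_{i,i+1} ρ_i` by conjugation. -/
def lamW (n i j : ℕ) : FM n :=
  if i < j then desc n i j * (WrN n i * WsbN n i) * asc n i j
  else desc n j i * (WrN n j * (WrN n j * WsbN n j) * WrN n j) * asc n j i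

/-- The word for `λ̄_{i,j}`, built from `λ̄_{i,i+1} = σ_i ρ_i`. -/
def lamBarW (n i j : ℕ) : FM n :=
  if i < j then desc n i j * (WsN n i * WrN n i) * asc n i j
  else desc n j i * (WrN n j * (WsN n j * WrN n j) * WrN n j) * asc n j i

/-- The word for `y_{i,j}`, built from `y_{i,i+1} = τ_i ρ_i`. -/
def yW (n i j : ℕ) : FM n :=
  if i < j then desc n i j * (WtN n i * WrN n i) * asc n i j
  else desc n j i * (WrN n j * (WtN n j * WrN n j) * WrN n j) * asc n j i

/-- The word for `x_{i,j}`, built from `x_{i,i+1} = σ_i` and `x_{i+1,i} = ρ_i σ_i ρ_i`. -/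
def xW (n i j : ℕ) : FM n :=
  if i < j then desc n i j * WsN n i * asc n i j
  else desc n j i * (WrN n j * WsN n j * WrN n j) * asc n j i

/-- The word for `x̄_{i,j}`, with `σ̄` in place of `σ`. -/
def xBarW (n i j : ℕ) : FM n :=
  if i < j then desc n i j * WsbN n i * asc n i j
  else desc n j i * (WrN n j * WsbN n j * WrN n j) * asc n j i

/-- The word for `z_{i,j}`, built from `z_{i,i+1} = τ_i` and `z_{i+1,i} = ρ_i τ_i ρ_i`. -/
def zW (n i j : ℕ) : FM n :=
  if i < j then desc n i j * WtN n i * asc n i j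
  else desc n j i * (WrN n j * WtN n j * WrN n j) * asc n j i

def lam (n : ℕ) (i j : Fin n) : STVB n := mkS n (lamW n i j)
def lamBar (n : ℕ) (i j : Fin n) : STVB n := mkS n (lamBarW n i j)
def yel (n : ℕ) (i j : Fin n) : STVB n := mkS n (yW n i j)
def xel (n : ℕ) (i j : Fin n) : STVB n := mkS n (xW n i j)
def xBar (n : ℕ) (i j : Fin n) : STVB n := mkS n (xBarW n i j)
def zel (n : ℕ) (i j : Fin n) : STVB n := mkS n (zW n i j)

end SingTVB

section

variable {M : Type*} [Monoid M] {x : M}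

theorem conj_eq_of_commute {a : M} (hx : x * x = 1) (h : Commute x a) : x * a * x = a := by
  rw [h.eq, mul_assoc, hx, mul_one]

theorem conj_mul_of_mul_self (hx : x * x = 1) (a b : M) :
    x * (a * b) * x = (x * a * x) * (x * b * x) :=
  calc x * (a * b) * x = x * a * (x * x) * b * x := by rw [hx, mul_one]; simp only [mul_assoc]
    _ = (x * a * x) * (x * b * x) := by simp only [mul_assoc]

theorem conj_conj_of_mul_self (hx : x * x = 1) (a : M) : x * (x * a * x) * x = a := by
  simp only [mul_assoc]; rw [hx, mul_one, ← mul_assoc, hx, one_mul]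

theorem conj_mul_mul_of_commute {p q : M} (hp : Commute x p) (hq : Commute x q) (a : M) :
    x * (p * a * q) * x = p * (x * a * x) * q := by
  simp only [← mul_assoc]; rw [hp.eq]; simp only [mul_assoc]; rw [hq.eq]

theorem conj_mem_closure_of_mul_self {s : Set M} (hx : x * x = 1)
    (hs : ∀ a ∈ s, x * a * x ∈ Submonoid.closure s) {a : M} (ha : a ∈ Submonoid.closure s) :
    x * a * x ∈ Submonoid.closure s := by
  induction ha using Submonoid.closure_induction with
  | mem a ha => exact hs a ha
  | one => rw [mul_one, hx]; exact Submonoid.one_mem _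
  | mul a b _ _ iha ihb =>
    rw [conj_mul_of_mul_self hx]; exact Submonoid.mul_mem _ iha ihb

theorem List.prod_reverse_mul_prod_of_mul_self {l : List M} (hl : ∀ x ∈ l, x * x = 1) :
    l.reverse.prod * l.prod = 1 ∧ l.prod * l.reverse.prod = 1 := by
  induction l with
  | nil => simp
  | cons y l ih =>
    obtain ⟨h₁, h₂⟩ := ih fun x hx => hl x (List.mem_cons_of_mem _ hx)
    have hy := hl y List.mem_cons_self
    simp only [List.reverse_cons, List.prod_append, List.prod_cons, List.prod_nil, mul_one]
    constructor
    · rw [mul_assoc, ← mul_assoc y, hy, one_mul, h₁]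
    · rw [mul_assoc, ← mul_assoc l.prod, h₂, one_mul, hy]

theorem mul_eq_mul_of_inverse {a d y : M} (had : a * d = 1) (hda : d * a = 1)
    (h : x * d = d * y) : y * a = a * x :=
  calc y * a = a * d * y * a := by rw [had, one_mul]
    _ = a * (x * d) * a := by rw [h]; simp only [mul_assoc]
    _ = a * x := by rw [mul_assoc, mul_assoc, hda, mul_one]

theorem List.range'_sub_append {m j k : ℕ} (hmj : m ≤ j) (hjk : j ≤ k) :
    List.range' m (j - m) ++ List.range' j (k - j) = List.range' m (k - m) := by
  have h := List.range'_append_1 (s := m) (m := j - m) (n := k - j)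
  rwa [Nat.add_sub_cancel' hmj, show j - m + (k - j) = k - m by omega] at h

end

namespace SingTVB

variable {n : ℕ}

theorem mkS_eq_of_rel {u v : FM n} (h : Rel n u v) : mkS n u = mkS n v :=
  PresentedMonoid.mk_eq_mk_of_rel h

-- Letters indexed by `ℕ`; they are `1` for `i ≥ n - 1`.
def rho (n i : ℕ) : STVB n := mkS n (WrN n i)
def sig (n i : ℕ) : STVB n := mkS n (WsN n i)
def sigb (n i : ℕ) : STVB n := mkS n (WsbN n i)
def tau (n i : ℕ) : STVB n := mkS n (WtN n i)

theorem rho_of_lt {i : ℕ} (h : i < n - 1) : rho n i = rhoE n ⟨i, h⟩ := by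
  rw [rho, WrN, dif_pos h, rhoE]

theorem rho_eq_one {i : ℕ} (h : ¬ i < n - 1) : rho n i = 1 := by
  rw [rho, WrN, dif_neg h, map_one]

theorem of_rho (i : Fin (n - 1)) : PresentedMonoid.of (Rel n) (Gen.rho i) = rho n i := by
  rw [rho, WrN, dif_pos i.isLt]; rfl

theorem of_sig (i : Fin (n - 1)) : PresentedMonoid.of (Rel n) (Gen.sig i) = sig n i := by
  rw [sig, WsN, dif_pos i.isLt]; rfl

theorem of_sigb (i : Fin (n - 1)) : PresentedMonoid.of (Rel n) (Gen.sigb i) = sigb n i := by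
  rw [sigb, WsbN, dif_pos i.isLt]; rfl

theorem of_tau (i : Fin (n - 1)) : PresentedMonoid.of (Rel n) (Gen.tau i) = tau n i := by
  rw [tau, WtN, dif_pos i.isLt]; rfl

theorem rho_mul_self (i : ℕ) : rho n i * rho n i = 1 := by
  unfold rho WrN; split_ifs with h
  · simpa only [map_mul, map_one] using mkS_eq_of_rel (Rel.rho2 ⟨i, h⟩)
  · simp

theorem sig_mul_sigb (i : ℕ) : sig n i * sigb n i = 1 := by
  unfold sig sigb WsN WsbN; split_ifs with h
  · simpa only [map_mul, map_one] using mkS_eq_of_rel (Rel.ssb ⟨i, h⟩)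
  · simp

theorem sigb_mul_sig (i : ℕ) : sigb n i * sig n i = 1 := by
  unfold sig sigb WsN WsbN; split_ifs with h
  · simpa only [map_mul, map_one] using mkS_eq_of_rel (Rel.sbs ⟨i, h⟩)
  · simp

theorem commute_rho_rho {i j : ℕ} (h : i + 2 ≤ j ∨ j + 2 ≤ i) :
    Commute (rho n i) (rho n j) := by
  unfold Commute SemiconjBy rho WrN; split_ifs with hi hj
  · simpa only [map_mul] using
      mkS_eq_of_rel (Rel.rr (i := ⟨i, hi⟩) (j := ⟨j, hj⟩) (by simp [Far]; omega))
  all_goals simp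

theorem commute_rho_sig {i j : ℕ} (h : i + 2 ≤ j ∨ j + 2 ≤ i) :
    Commute (rho n j) (sig n i) := by
  refine Commute.symm ?_
  unfold Commute SemiconjBy rho WrN sig WsN; split_ifs with hi hj
  · simpa only [map_mul] using
      mkS_eq_of_rel (Rel.sr (i := ⟨i, hi⟩) (j := ⟨j, hj⟩) (by simp [Far]; omega))
  all_goals simp

theorem commute_rho_tau {i j : ℕ} (h : i + 2 ≤ j ∨ j + 2 ≤ i) :
    Commute (rho n j) (tau n i) := by
  refine Commute.symm ?_
  unfold Commute SemiconjBy rho WrN tau WtN; split_ifs with hi hj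
  · simpa only [map_mul] using
      mkS_eq_of_rel (Rel.tr (i := ⟨i, hi⟩) (j := ⟨j, hj⟩) (by simp [Far]; omega))
  all_goals simp

theorem commute_rho_sigb {i j : ℕ} (h : i + 2 ≤ j ∨ j + 2 ≤ i) :
    Commute (rho n j) (sigb n i) :=
  (commute_rho_sig h).units_inv_right (u := ⟨sig n i, sigb n i, sig_mul_sigb i, sigb_mul_sig i⟩)

theorem rho_braid {i : ℕ} (h : i + 2 ≤ n - 1) :
    rho n i * rho n (i + 1) * rho n i = rho n (i + 1) * rho n i * rho n (i + 1) := by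
  have hi : i < n - 1 := by omega
  simp only [rho, WrN, dif_pos hi, dif_pos (show i + 1 < n - 1 from h)]
  simpa only [map_mul] using mkS_eq_of_rel (Rel.rrr (i := ⟨i, hi⟩) (j := ⟨i + 1, h⟩) rfl)

theorem rho_sig_rho_braid {i : ℕ} (h : i + 2 ≤ n - 1) :
    rho n i * sig n (i + 1) * rho n i = rho n (i + 1) * sig n i * rho n (i + 1) := by
  have hi : i < n - 1 := by omega
  simp only [rho, sig, WrN, WsN, dif_pos hi, dif_pos (show i + 1 < n - 1 from h)]
  simpa only [map_mul] using mkS_eq_of_rel (Rel.rsr (i := ⟨i, hi⟩) (j := ⟨i + 1, h⟩) rfl)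

theorem rho_tau_rho_braid {i : ℕ} (h : i + 2 ≤ n - 1) :
    rho n i * tau n (i + 1) * rho n i = rho n (i + 1) * tau n i * rho n (i + 1) := by
  have hi : i < n - 1 := by omega
  simp only [rho, tau, WrN, WtN, dif_pos hi, dif_pos (show i + 1 < n - 1 from h)]
  simpa only [map_mul] using mkS_eq_of_rel (Rel.rtr (i := ⟨i, hi⟩) (j := ⟨i + 1, h⟩) rfl)

/-- Both sides are the inverses of the two sides of `rho_sig_rho_braid`. -/
theorem rho_sigb_rho_braid {i : ℕ} (h : i + 2 ≤ n - 1) :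
    rho n i * sigb n (i + 1) * rho n i = rho n (i + 1) * sigb n i * rho n (i + 1) := by
  have inv_conj : ∀ j k, (rho n j * sigb n k * rho n j) * (rho n j * sig n k * rho n j) = 1 := by
    intro j k
    rw [← conj_mul_of_mul_self (rho_mul_self j), sigb_mul_sig, mul_one, rho_mul_self]
  have conj_inv : ∀ j k, (rho n j * sig n k * rho n j) * (rho n j * sigb n k * rho n j) = 1 := by
    intro j k
    rw [← conj_mul_of_mul_self (rho_mul_self j), sig_mul_sigb, mul_one, rho_mul_self]
  refine (left_inv_eq_right_inv (inv_conj (i + 1) i) ?_).symm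
  rw [← rho_sig_rho_braid h, conj_inv]

theorem rho_mul_gamE_mul_rho {m : ℕ} (hm : m < n - 1) (j : Fin n) :
    rho n m * gamE n j * rho n m = gamE n (swp ⟨m, hm⟩ j) := by
  set i : Fin (n - 1) := ⟨m, hm⟩
  have hrel : gamE n (fb i) * rho n m = rho n m * gamE n (fa i) := by
    rw [rho_of_lt hm]
    simpa only [map_mul, gamE, rhoE] using mkS_eq_of_rel (Rel.grel i)
  rw [swp, Equiv.swap_apply_def]
  split_ifs with ha hb
  · rw [ha, ← hrel, mul_assoc, rho_mul_self, mul_one]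
  · rw [hb, mul_assoc, hrel, ← mul_assoc, rho_mul_self, one_mul]
  · refine conj_eq_of_commute (rho_mul_self m) ?_
    rw [rho_of_lt hm, Commute, SemiconjBy]
    simpa only [map_mul, gamE, rhoE] using (mkS_eq_of_rel (Rel.grc (i := i) ha hb)).symm

theorem val_swp_apply (i : Fin (n - 1)) (x : Fin n) :
    (swp i x : ℕ) = Equiv.swap (i : ℕ) (i + 1) x :=
  (Fin.val_injective.swap_apply (fa i) (fb i) x).symm

def rhoDesc (n m k : ℕ) : STVB n := ((List.range' m (k - m)).reverse.map (rho n)).prod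

def rhoAsc (n m k : ℕ) : STVB n := ((List.range' m (k - m)).map (rho n)).prod

theorem mkS_desc (a b : ℕ) : mkS n (desc n a b) = rhoDesc n (a + 1) b := by
  rw [desc, map_list_prod, List.map_map, rhoDesc, Nat.sub_sub, Nat.add_comm 1 a]; rfl

theorem mkS_asc (a b : ℕ) : mkS n (asc n a b) = rhoAsc n (a + 1) b := by
  rw [asc, map_list_prod, List.map_map, rhoAsc, Nat.sub_sub, Nat.add_comm 1 a]; rfl

theorem rhoDesc_of_le {m k : ℕ} (h : k ≤ m) : rhoDesc n m k = 1 := by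
  rw [rhoDesc, Nat.sub_eq_zero_of_le h]; rfl

theorem rhoAsc_of_le {m k : ℕ} (h : k ≤ m) : rhoAsc n m k = 1 := by
  rw [rhoAsc, Nat.sub_eq_zero_of_le h]; rfl

theorem rhoDesc_succ_self (k : ℕ) : rhoDesc n k (k + 1) = rho n k := by
  simp [rhoDesc]

theorem rhoAsc_succ_self (k : ℕ) : rhoAsc n k (k + 1) = rho n k := by
  simp [rhoAsc]

theorem rhoDesc_trans {m j k : ℕ} (hmj : m ≤ j) (hjk : j ≤ k) :
    rhoDesc n m k = rhoDesc n j k * rhoDesc n m j := by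
  rw [rhoDesc, rhoDesc, rhoDesc, ← List.range'_sub_append hmj hjk, List.reverse_append,
    List.map_append, List.prod_append]

theorem rhoAsc_trans {m j k : ℕ} (hmj : m ≤ j) (hjk : j ≤ k) :
    rhoAsc n m k = rhoAsc n m j * rhoAsc n j k := by
  rw [rhoAsc, rhoAsc, rhoAsc, ← List.range'_sub_append hmj hjk, List.map_append, List.prod_append]

theorem rhoDesc_succ {m k : ℕ} (h : m ≤ k) : rhoDesc n m (k + 1) = rho n k * rhoDesc n m k := by
  rw [rhoDesc_trans h k.le_succ, rhoDesc_succ_self]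

theorem rhoAsc_succ {m k : ℕ} (h : m ≤ k) : rhoAsc n m (k + 1) = rhoAsc n m k * rho n k := by
  rw [rhoAsc_trans h k.le_succ, rhoAsc_succ_self]

theorem rhoDesc_eq_mul_rho {m k : ℕ} (h : m < k) :
    rhoDesc n m k = rhoDesc n (m + 1) k * rho n m := by
  rw [rhoDesc_trans m.le_succ h, rhoDesc_succ_self]

theorem rhoAsc_eq_rho_mul {m k : ℕ} (h : m < k) :
    rhoAsc n m k = rho n m * rhoAsc n (m + 1) k := by
  rw [rhoAsc_trans m.le_succ h, rhoAsc_succ_self]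

theorem rhoDesc_mul_rhoAsc (m k : ℕ) : rhoDesc n m k * rhoAsc n m k = 1 := by
  rw [rhoDesc, rhoAsc, List.map_reverse]
  exact (List.prod_reverse_mul_prod_of_mul_self fun x hx => by
    obtain ⟨i, -, rfl⟩ := List.mem_map.1 hx; exact rho_mul_self i).1

theorem rhoAsc_mul_rhoDesc (m k : ℕ) : rhoAsc n m k * rhoDesc n m k = 1 := by
  rw [rhoDesc, rhoAsc, List.map_reverse]
  exact (List.prod_reverse_mul_prod_of_mul_self fun x hx => by
    obtain ⟨i, -, rfl⟩ := List.mem_map.1 hx; exact rho_mul_self i).2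

theorem commute_rho_rhoDesc {j m k : ℕ} (h : j + 2 ≤ m ∨ k + 1 ≤ j) :
    Commute (rho n j) (rhoDesc n m k) :=
  Commute.list_prod_right _ _ fun x hx => by
    obtain ⟨i, hi, rfl⟩ := List.mem_map.1 hx
    rw [List.mem_reverse, List.mem_range'_1] at hi
    exact commute_rho_rho (by omega)

theorem commute_rho_rhoAsc {j m k : ℕ} (h : j + 2 ≤ m ∨ k + 1 ≤ j) :
    Commute (rho n j) (rhoAsc n m k) :=
  Commute.list_prod_right _ _ fun x hx => by
    obtain ⟨i, hi, rfl⟩ := List.mem_map.1 hx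
    rw [List.mem_range'_1] at hi
    exact commute_rho_rho (by omega)

theorem rho_mul_rhoDesc {j m k : ℕ} (hmj : m ≤ j) (hjk : j + 2 ≤ k) (hk : k ≤ n - 1) :
    rho n j * rhoDesc n m k = rhoDesc n m k * rho n (j + 1) := by
  have hsplit :
      rhoDesc n m k = rhoDesc n (j + 2) k * (rho n (j + 1) * rho n j) * rhoDesc n m j := by
    rw [rhoDesc_trans (by omega : m ≤ j + 2) hjk, rhoDesc_succ (by omega), rhoDesc_succ hmj]
    simp only [mul_assoc]
  have hfar : Commute (rho n j) (rhoDesc n (j + 2) k) := commute_rho_rhoDesc (by omega)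
  have hfar' : Commute (rho n (j + 1)) (rhoDesc n m j) := commute_rho_rhoDesc (by omega)
  calc rho n j * rhoDesc n m k
      = rhoDesc n (j + 2) k * (rho n j * rho n (j + 1) * rho n j) * rhoDesc n m j := by
        rw [hsplit, ← mul_assoc, ← mul_assoc, hfar.eq]; simp only [mul_assoc]
    _ = rhoDesc n m k * rho n (j + 1) := by
        rw [rho_braid (by omega), hsplit]; simp only [mul_assoc]; rw [hfar'.eq]

theorem rho_mul_rhoAsc {j m k : ℕ} (hmj : m ≤ j) (hjk : j + 2 ≤ k) (hk : k ≤ n - 1) :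
    rho n (j + 1) * rhoAsc n m k = rhoAsc n m k * rho n j :=
  mul_eq_mul_of_inverse (rhoAsc_mul_rhoDesc m k) (rhoDesc_mul_rhoAsc m k)
    (rho_mul_rhoDesc hmj hjk hk)

/-- The conditions on a family `y a` of elements on the strands `a, a + 1` under which the
`pairElem y k l` are permuted by conjugation with the `ρ_m`. -/
structure RhoCompatible (y : ℕ → STVB n) : Prop where
  commute_rho : ∀ {a m : ℕ}, m + 2 ≤ a ∨ a + 2 ≤ m → Commute (rho n m) (y a)
  braid : ∀ {a : ℕ}, a + 2 ≤ n - 1 →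
    rho n a * y (a + 1) * rho n a = rho n (a + 1) * y a * rho n (a + 1)

def conjRho (y : ℕ → STVB n) (a : ℕ) : STVB n := rho n a * y a * rho n a

def arc (y : ℕ → STVB n) (a b : ℕ) : STVB n := rhoDesc n (a + 1) b * y a * rhoAsc n (a + 1) b

/-- The paper's `x_{k,l}` for the family with `x_{a,a+1} = y a`, `x_{a+1,a} = ρ_a (y a) ρ_a`. -/
def pairElem (y : ℕ → STVB n) (k l : ℕ) : STVB n :=
  if k < l then arc y k l else arc (conjRho y) l k

theorem conjRho_conjRho (y : ℕ → STVB n) : conjRho (conjRho y) = y :=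
  funext fun a => conj_conj_of_mul_self (rho_mul_self a) (y a)

theorem pairElem_conjRho (y : ℕ → STVB n) {k l : ℕ} (hkl : k ≠ l) :
    pairElem (conjRho y) k l = pairElem y l k := by
  rcases lt_or_gt_of_ne hkl with h | h
  · rw [pairElem, if_pos h, pairElem, if_neg (by omega)]
  · rw [pairElem, if_neg (by omega), pairElem, if_pos h, conjRho_conjRho]

theorem arc_succ_self (y : ℕ → STVB n) (a : ℕ) : arc y a (a + 1) = y a := by
  rw [arc, rhoDesc_of_le le_rfl, rhoAsc_of_le le_rfl, one_mul, mul_one]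

theorem conj_arc_succ_right (y : ℕ → STVB n) {a b : ℕ} (hab : a < b) :
    rho n b * arc y a b * rho n b = arc y a (b + 1) := by
  rw [arc, arc, rhoDesc_succ hab, rhoAsc_succ hab]; simp only [mul_assoc]

theorem conj_arc_pred_right (y : ℕ → STVB n) {a m : ℕ} (ham : a < m) :
    rho n m * arc y a (m + 1) * rho n m = arc y a m := by
  rw [← conj_arc_succ_right y ham, conj_conj_of_mul_self (rho_mul_self m)]

theorem pairElem_succ_right (y : ℕ → STVB n) (a : ℕ) : pairElem y a (a + 1) = y a := by
  rw [pairElem, if_pos a.lt_succ_self, arc_succ_self]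

theorem pairElem_succ_left (y : ℕ → STVB n) (a : ℕ) :
    pairElem y (a + 1) a = rho n a * y a * rho n a := by
  rw [pairElem, if_neg (by omega), arc_succ_self, conjRho]

namespace RhoCompatible

variable {y : ℕ → STVB n} (hy : RhoCompatible y)
include hy

theorem conjRho : RhoCompatible (conjRho y) where
  commute_rho h := ((commute_rho_rho (by omega)).mul_right (hy.commute_rho h)).mul_right
    (commute_rho_rho (by omega))
  braid {a} h := by
    have hbr := rho_braid h
    have hy' : y (a + 1) = rho n a * (rho n (a + 1) * y a * rho n (a + 1)) * rho n a := by
      rw [← hy.braid h, conj_conj_of_mul_self (rho_mul_self a)]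
    calc rho n a * (rho n (a + 1) * y (a + 1) * rho n (a + 1)) * rho n a
        = (rho n a * rho n (a + 1) * rho n a) * (rho n (a + 1) * y a * rho n (a + 1)) *
            (rho n a * rho n (a + 1) * rho n a) := by rw [hy']; simp only [mul_assoc]
      _ = rho n (a + 1) * (rho n a * ((rho n (a + 1) * rho n (a + 1)) * y a *
            (rho n (a + 1) * rho n (a + 1))) * rho n a) * rho n (a + 1) := by
          rw [hbr]; simp only [mul_assoc]
      _ = rho n (a + 1) * (rho n a * y a * rho n a) * rho n (a + 1) := by
          rw [rho_mul_self, one_mul, mul_one]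

theorem conj_arc_of_far {a b m : ℕ} (hab : a < b) (h : m + 1 < a ∨ b < m) :
    rho n m * arc y a b * rho n m = arc y a b :=
  conj_eq_of_commute (rho_mul_self m) <|
    ((commute_rho_rhoDesc (by omega)).mul_right (hy.commute_rho (by omega))).mul_right
      (commute_rho_rhoAsc (by omega))

theorem conj_arc_of_interior {a b m : ℕ} (ham : a < m) (hmb : m + 2 ≤ b) (hb : b ≤ n - 1) :
    rho n m * arc y a b * rho n m = arc y a b := by
  have hd := rho_mul_rhoDesc (n := n) (m := a + 1) ham hmb hb
  have ha := rho_mul_rhoAsc (n := n) (m := a + 1) ham hmb hb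
  have hc : Commute (rho n (m + 1)) (y a) := hy.commute_rho (by omega)
  calc rho n m * arc y a b * rho n m
      = rhoDesc n (a + 1) b * (rho n (m + 1) * y a) * rhoAsc n (a + 1) b * rho n m := by
        rw [arc]; simp only [← mul_assoc]; rw [hd]
    _ = rhoDesc n (a + 1) b * y a * (rho n (m + 1) * rhoAsc n (a + 1) b) * rho n m := by
        rw [hc.eq]; simp only [mul_assoc]
    _ = rhoDesc n (a + 1) b * y a * rhoAsc n (a + 1) b * (rho n m * rho n m) := by
        rw [ha]; simp only [mul_assoc]
    _ = arc y a b := by rw [rho_mul_self, mul_one, arc]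

theorem conj_arc_succ_left {a b : ℕ} (hab : a + 2 ≤ b) (hb : b ≤ n - 1) :
    rho n a * arc y a b * rho n a = arc y (a + 1) b := by
  have hd : Commute (rho n a) (rhoDesc n (a + 2) b) := commute_rho_rhoDesc (by omega)
  have ha : Commute (rho n a) (rhoAsc n (a + 2) b) := commute_rho_rhoAsc (by omega)
  calc rho n a * arc y a b * rho n a
      = rhoDesc n (a + 2) b * (rho n a * (rho n (a + 1) * y a * rho n (a + 1)) * rho n a) *
          rhoAsc n (a + 2) b := by
        rw [← conj_mul_mul_of_commute hd ha, arc, rhoDesc_eq_mul_rho (by omega),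
          rhoAsc_eq_rho_mul (by omega)]
        simp only [mul_assoc]
    _ = arc y (a + 1) b := by
        rw [← hy.braid (by omega), conj_conj_of_mul_self (rho_mul_self a), arc]

theorem conj_arc_pred_left {m b : ℕ} (hmb : m + 2 ≤ b) (hb : b ≤ n - 1) :
    rho n m * arc y (m + 1) b * rho n m = arc y m b := by
  rw [← hy.conj_arc_succ_left hmb hb, conj_conj_of_mul_self (rho_mul_self m)]

theorem conj_arc {k l m : ℕ} (hkl : k < l) (hl : l < n) (hm : m + 2 ≤ n) :
    rho n m * arc y k l * rho n m =
      pairElem y (Equiv.swap m (m + 1) k) (Equiv.swap m (m + 1) l) := by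
  have hl' : l ≤ n - 1 := by omega
  have swap_eq {j : ℕ} (h₁ : j ≠ m) (h₂ : j ≠ m + 1) : Equiv.swap m (m + 1) j = j :=
    Equiv.swap_apply_of_ne_of_ne h₁ h₂
  rcases (by omega : (m + 1 < k ∨ l < m) ∨ (k < m ∧ m + 1 < l) ∨ k = m + 1 ∨ l = m ∨
      (l = m + 1 ∧ k < m) ∨ (k = m ∧ l = m + 1) ∨ (k = m ∧ m + 1 < l)) with
    hfar | ⟨hkm, hml⟩ | rfl | rfl | ⟨rfl, hkm⟩ | ⟨rfl, rfl⟩ | ⟨rfl, hml⟩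
  · rw [hy.conj_arc_of_far hkl hfar, swap_eq (by omega) (by omega), swap_eq (by omega) (by omega),
      pairElem, if_pos hkl]
  · rw [hy.conj_arc_of_interior hkm hml hl', swap_eq (by omega) (by omega),
      swap_eq (by omega) (by omega), pairElem, if_pos hkl]
  · rw [hy.conj_arc_pred_left (by omega) hl', Equiv.swap_apply_right,
      swap_eq (by omega) (by omega), pairElem, if_pos (by omega)]
  · rw [conj_arc_succ_right y hkl, Equiv.swap_apply_left, swap_eq (by omega) (by omega),
      pairElem, if_pos (by omega)]
  · rw [conj_arc_pred_right y hkm, Equiv.swap_apply_right, swap_eq (by omega) (by omega),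
      pairElem, if_pos hkm]
  · rw [arc_succ_self, Equiv.swap_apply_left, Equiv.swap_apply_right, pairElem_succ_left]
  · rw [hy.conj_arc_succ_left hml hl', Equiv.swap_apply_left, swap_eq (by omega) (by omega),
      pairElem, if_pos hml]

theorem conj_pairElem {k l m : ℕ} (hk : k < n) (hl : l < n) (hkl : k ≠ l) (hm : m + 2 ≤ n) :
    rho n m * pairElem y k l * rho n m =
      pairElem y (Equiv.swap m (m + 1) k) (Equiv.swap m (m + 1) l) := by
  rcases lt_or_gt_of_ne hkl with h | h
  · rw [pairElem, if_pos h, hy.conj_arc h hl hm]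
  · rw [pairElem, if_neg (by omega), hy.conjRho.conj_arc h hk hm,
      pairElem_conjRho _ ((Equiv.injective _).ne hkl.symm)]

end RhoCompatible

theorem RhoCompatible.mul {y y' : ℕ → STVB n} (hy : RhoCompatible y) (hy' : RhoCompatible y') :
    RhoCompatible (y * y') where
  commute_rho h := (hy.commute_rho h).mul_right (hy'.commute_rho h)
  braid {a} h := by
    simp only [Pi.mul_apply]
    rw [conj_mul_of_mul_self (rho_mul_self a), conj_mul_of_mul_self (rho_mul_self (a + 1)),
      hy.braid h, hy'.braid h]

theorem rhoCompatible_rho : RhoCompatible (rho n) :=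
  ⟨commute_rho_rho, rho_braid⟩

theorem rhoCompatible_sig : RhoCompatible (sig n) :=
  ⟨fun h => commute_rho_sig (by omega), rho_sig_rho_braid⟩

theorem rhoCompatible_sigb : RhoCompatible (sigb n) :=
  ⟨fun h => commute_rho_sigb (by omega), rho_sigb_rho_braid⟩

theorem rhoCompatible_tau : RhoCompatible (tau n) :=
  ⟨fun h => commute_rho_tau (by omega), rho_tau_rho_braid⟩

theorem lam_eq_pairElem (k l : Fin n) : lam n k l = pairElem (rho n * sigb n) k l := by
  rw [lam, lamW, pairElem]; split_ifs <;> simp only [map_mul, mkS_desc, mkS_asc] <;> rfl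

theorem lamBar_eq_pairElem (k l : Fin n) : lamBar n k l = pairElem (sig n * rho n) k l := by
  rw [lamBar, lamBarW, pairElem]; split_ifs <;> simp only [map_mul, mkS_desc, mkS_asc] <;> rfl

theorem zel_eq_pairElem (k l : Fin n) : zel n k l = pairElem (tau n) k l := by
  rw [zel, zW, pairElem]; split_ifs <;> simp only [map_mul, mkS_desc, mkS_asc] <;> rfl

theorem RhoCompatible.conj_pairElem_fin {y : ℕ → STVB n} (hy : RhoCompatible y) {m : ℕ}
    (hm : m < n - 1) {k l : Fin n} (hkl : k ≠ l) :
    rho n m * pairElem y k l * rho n m = pairElem y (swp ⟨m, hm⟩ k) (swp ⟨m, hm⟩ l) := by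
  rw [hy.conj_pairElem k.isLt l.isLt (Fin.val_injective.ne hkl) (by omega), val_swp_apply,
    val_swp_apply]

def gens (n : ℕ) : Set (STVB n) :=
  {x | ∃ k l : Fin n, k ≠ l ∧ (x = lam n k l ∨ x = lamBar n k l ∨ x = zel n k l)}
    ∪ Set.range (gamE n)

theorem conj_rho_mem_closure_gens (m : ℕ) {x : STVB n} (hx : x ∈ Submonoid.closure (gens n)) :
    rho n m * x * rho n m ∈ Submonoid.closure (gens n) := by
  refine conj_mem_closure_of_mul_self (rho_mul_self m) (fun a ha => ?_) hx
  by_cases hm : m < n - 1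
  swap
  · rw [rho_eq_one hm, one_mul, mul_one]; exact Submonoid.subset_closure ha
  have hne {k l : Fin n} (hkl : k ≠ l) : swp ⟨m, hm⟩ k ≠ swp ⟨m, hm⟩ l :=
    (Equiv.injective _).ne hkl
  rcases ha with ⟨k, l, hkl, rfl | rfl | rfl⟩ | ⟨j, rfl⟩
  · rw [lam_eq_pairElem, (rhoCompatible_rho.mul rhoCompatible_sigb).conj_pairElem_fin hm hkl,
      ← lam_eq_pairElem]
    exact Submonoid.subset_closure (.inl ⟨_, _, hne hkl, .inl rfl⟩)
  · rw [lamBar_eq_pairElem, (rhoCompatible_sig.mul rhoCompatible_rho).conj_pairElem_fin hm hkl,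
      ← lamBar_eq_pairElem]
    exact Submonoid.subset_closure (.inl ⟨_, _, hne hkl, .inr (.inl rfl)⟩)
  · rw [zel_eq_pairElem, rhoCompatible_tau.conj_pairElem_fin hm hkl, ← zel_eq_pairElem]
    exact Submonoid.subset_closure (.inl ⟨_, _, hne hkl, .inr (.inr rfl)⟩)
  · rw [rho_mul_gamE_mul_rho hm]
    exact Submonoid.subset_closure (.inr ⟨_, rfl⟩)

section Letters

variable {i : ℕ} (hi : i < n - 1)
include hi

theorem sig_mul_rho_mem_closure_gens : sig n i * rho n i ∈ Submonoid.closure (gens n) := by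
  have h : lamBar n ⟨i, by omega⟩ ⟨i + 1, by omega⟩ = sig n i * rho n i := by
    rw [lamBar_eq_pairElem]; exact pairElem_succ_right _ i
  rw [← h]; exact Submonoid.subset_closure (.inl ⟨_, _, by simp, .inr (.inl rfl)⟩)

theorem sigb_mul_rho_mem_closure_gens : sigb n i * rho n i ∈ Submonoid.closure (gens n) := by
  have h : lam n ⟨i + 1, by omega⟩ ⟨i, by omega⟩ = sigb n i * rho n i := by
    rw [lam_eq_pairElem]
    exact (pairElem_succ_left _ i).trans <| by
      rw [Pi.mul_apply, ← mul_assoc, rho_mul_self, one_mul]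
  rw [← h]; exact Submonoid.subset_closure (.inl ⟨_, _, by simp, .inl rfl⟩)

theorem tau_mem_closure_gens : tau n i ∈ Submonoid.closure (gens n) := by
  have h : zel n ⟨i, by omega⟩ ⟨i + 1, by omega⟩ = tau n i := by
    rw [zel_eq_pairElem]; exact pairElem_succ_right _ i
  rw [← h]; exact Submonoid.subset_closure (.inl ⟨_, _, by simp, .inr (.inr rfl)⟩)

end Letters

theorem map_pairElem_eq_one {G : Type*} [Monoid G] (φ : STVB n →* G) {y : ℕ → STVB n}
    (hy : ∀ a, φ (y a) = 1) (k l : ℕ) : φ (pairElem y k l) = 1 := by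
  have harc {z : ℕ → STVB n} (hz : ∀ a, φ (z a) = 1) (a b : ℕ) : φ (arc z a b) = 1 := by
    rw [arc, map_mul, map_mul, hz, mul_one, ← map_mul, rhoDesc_mul_rhoAsc, map_one]
  unfold pairElem; split_ifs
  · exact harc hy k l
  · refine harc (fun a => ?_) l k
    rw [conjRho, map_mul, map_mul, hy, mul_one, ← map_mul, rho_mul_self, map_one]

theorem closure_gens_le_mker (φ : STVB n →* Equiv.Perm (Fin n))
    (hs : ∀ i : Fin (n - 1), φ (sigE n i) = swp i)
    (hsb : ∀ i : Fin (n - 1), φ (sigbE n i) = swp i)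
    (hr : ∀ i : Fin (n - 1), φ (rhoE n i) = swp i)
    (ht : ∀ i : Fin (n - 1), φ (tauE n i) = 1)
    (hg : ∀ j : Fin n, φ (gamE n j) = 1) :
    Submonoid.closure (gens n) ≤ MonoidHom.mker φ := by
  have hsig (a : ℕ) : φ (sig n a) = φ (rho n a) := by
    unfold sig rho WsN WrN; split_ifs with h
    · exact (hs ⟨a, h⟩).trans (hr ⟨a, h⟩).symm
    · rfl
  have hsigb (a : ℕ) : φ (sigb n a) = φ (rho n a) := by
    unfold sigb rho WsbN WrN; split_ifs with h
    · exact (hsb ⟨a, h⟩).trans (hr ⟨a, h⟩).symm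
    · rfl
  have htau (a : ℕ) : φ (tau n a) = 1 := by
    unfold tau WtN; split_ifs with h
    · exact ht ⟨a, h⟩
    · exact map_one φ
  have hrho (a : ℕ) : φ (rho n a) * φ (rho n a) = 1 := by
    rw [← map_mul, rho_mul_self, map_one]
  rw [Submonoid.closure_le]
  rintro _ (⟨k, l, -, rfl | rfl | rfl⟩ | ⟨j, rfl⟩) <;> refine MonoidHom.mem_mker.2 ?_
  · rw [lam_eq_pairElem]
    exact map_pairElem_eq_one φ (fun a => by rw [Pi.mul_apply, map_mul, hsigb, hrho]) k l
  · rw [lamBar_eq_pairElem]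
    exact map_pairElem_eq_one φ (fun a => by rw [Pi.mul_apply, map_mul, hsig, hrho]) k l
  · rw [zel_eq_pairElem]
    exact map_pairElem_eq_one φ htau k l
  · exact hg j

def rhoSubmonoid (n k : ℕ) : Submonoid (STVB n) := Submonoid.closure (rho n '' Set.Iio k)

theorem rho_mem_rhoSubmonoid {i k : ℕ} (h : i < k) : rho n i ∈ rhoSubmonoid n k :=
  Submonoid.subset_closure ⟨i, h, rfl⟩

section Decomposition

open scoped Pointwise

variable {x : STVB n}
  (hx : x ∈ (rhoSubmonoid n (n - 1) : Set (STVB n)) * Submonoid.closure (gens n))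
include hx

theorem mul_mem_rhoSubmonoid_mul_closure_gens {y : STVB n} (hy : y ∈ Submonoid.closure (gens n)) :
    x * y ∈ (rhoSubmonoid n (n - 1) : Set (STVB n)) * Submonoid.closure (gens n) := by
  obtain ⟨r, hr, c, hc, rfl⟩ := hx
  exact ⟨r, hr, c * y, Submonoid.mul_mem _ hc hy, (mul_assoc r c y).symm⟩

theorem mul_rho_mem_rhoSubmonoid_mul_closure_gens {i : ℕ} (hi : i < n - 1) :
    x * rho n i ∈ (rhoSubmonoid n (n - 1) : Set (STVB n)) * Submonoid.closure (gens n) := by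
  obtain ⟨r, hr, c, hc, rfl⟩ := hx
  refine ⟨r * rho n i, Submonoid.mul_mem _ hr (rho_mem_rhoSubmonoid hi), rho n i * c * rho n i,
    conj_rho_mem_closure_gens i hc, ?_⟩
  show r * rho n i * (rho n i * c * rho n i) = r * c * rho n i
  rw [mul_assoc, ← mul_assoc (rho n i), ← mul_assoc (rho n i), rho_mul_self, one_mul, mul_assoc]

theorem mul_mem_rhoSubmonoid_mul_closure_gens_of_mul_rho {y : STVB n} {i : ℕ} (hi : i < n - 1)
    (hy : y * rho n i ∈ Submonoid.closure (gens n)) :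
    x * y ∈ (rhoSubmonoid n (n - 1) : Set (STVB n)) * Submonoid.closure (gens n) := by
  have h :=
    mul_rho_mem_rhoSubmonoid_mul_closure_gens (mul_mem_rhoSubmonoid_mul_closure_gens hx hy) hi
  rwa [mul_assoc, mul_assoc, rho_mul_self, mul_one] at h

end Decomposition

open scoped Pointwise in
theorem mem_rhoSubmonoid_mul_closure_gens (x : STVB n) :
    x ∈ (rhoSubmonoid n (n - 1) : Set (STVB n)) * Submonoid.closure (gens n) := by
  induction x using Submonoid.induction_of_closure_eq_top_right
    (PresentedMonoid.closure_range_of (Rel n)) with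
  | one => exact ⟨1, Submonoid.one_mem _, 1, Submonoid.one_mem _, mul_one 1⟩
  | mul_right x y hy hx =>
    obtain ⟨g, rfl⟩ := hy
    have hi (i : Fin (n - 1)) : (i : ℕ) < n - 1 := i.isLt
    cases g with
    | rho i =>
      rw [of_rho]; exact mul_rho_mem_rhoSubmonoid_mul_closure_gens hx (hi i)
    | sig i =>
      rw [of_sig]
      exact mul_mem_rhoSubmonoid_mul_closure_gens_of_mul_rho hx (hi i)
        (sig_mul_rho_mem_closure_gens (hi i))
    | sigb i =>
      rw [of_sigb]
      exact mul_mem_rhoSubmonoid_mul_closure_gens_of_mul_rho hx (hi i)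
        (sigb_mul_rho_mem_closure_gens (hi i))
    | tau i =>
      rw [of_tau]
      exact mul_mem_rhoSubmonoid_mul_closure_gens hx (tau_mem_closure_gens (hi i))
    | gam j =>
      exact mul_mem_rhoSubmonoid_mul_closure_gens hx (Submonoid.subset_closure (.inr ⟨j, rfl⟩))

section Permutations

variable (φ : STVB n →* Equiv.Perm (Fin n)) (hr : ∀ i : Fin (n - 1), φ (rhoE n i) = swp i)
include hr

theorem val_map_rho_apply {i : ℕ} (hi : i < n - 1) (x : Fin n) :
    (φ (rho n i) x : ℕ) = Equiv.swap i (i + 1) (x : ℕ) := by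
  rw [rho_of_lt hi, hr, val_swp_apply]

theorem map_apply_eq_self_of_mem_rhoSubmonoid {k : ℕ} {x : STVB n} (hx : x ∈ rhoSubmonoid n k)
    (j : Fin n) (hj : k < j) : φ x j = j := by
  induction hx using Submonoid.closure_induction with
  | mem _ hx =>
    obtain ⟨i, hik, rfl⟩ := hx
    by_cases hi : i < n - 1
    · exact Fin.ext <| by
        rw [val_map_rho_apply φ hr hi, Equiv.swap_apply_of_ne_of_ne] <;> simp at hik <;> omega
    · rw [rho_eq_one hi, map_one, Equiv.Perm.one_apply]
  | one => rw [map_one, Equiv.Perm.one_apply]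
  | mul _ _ _ _ ha hb => rw [map_mul, Equiv.Perm.mul_apply, hb, ha]

theorem map_rhoDesc_apply {m k : ℕ} (hmk : m ≤ k) (hk : k < n) :
    φ (rhoDesc n m k) ⟨m, by omega⟩ = ⟨k, by omega⟩ := by
  induction k, hmk using Nat.le_induction with
  | base => rw [rhoDesc_of_le le_rfl, map_one, Equiv.Perm.one_apply]
  | succ k hmk ih =>
    rw [rhoDesc_succ hmk, map_mul, Equiv.Perm.mul_apply, ih (by omega)]
    exact Fin.ext <| by rw [val_map_rho_apply φ hr (by omega), Equiv.swap_apply_left]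

end Permutations

theorem exists_mem_rhoSubmonoid_mul_rhoDesc {k : ℕ} (hk : k + 1 ≤ n - 1) {x : STVB n}
    (hx : x ∈ rhoSubmonoid n (k + 1)) :
    ∃ r ∈ rhoSubmonoid n k, ∃ m ≤ k + 1, x = r * rhoDesc n m (k + 1) := by
  induction hx using Submonoid.closure_induction_right with
  | one => exact ⟨1, Submonoid.one_mem _, k + 1, le_rfl, by rw [rhoDesc_of_le le_rfl, one_mul]⟩
  | mul_right _ _ g hg ih =>
    obtain ⟨i, hi, rfl⟩ := hg
    obtain ⟨r, hr, m, hm, rfl⟩ := ih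
    simp only [Set.mem_Iio] at hi
    rcases Nat.lt_or_ge (i + 1) m with him | hmi
    · refine ⟨r * rho n i, Submonoid.mul_mem _ hr (rho_mem_rhoSubmonoid (by omega)), m, hm, ?_⟩
      rw [mul_assoc, mul_assoc, (commute_rho_rhoDesc (.inl him)).eq]
    obtain rfl | rfl | hmi := (by omega : m = i + 1 ∨ m = i ∨ m < i)
    · exact ⟨r, hr, i, by omega, by rw [mul_assoc, ← rhoDesc_eq_mul_rho hi]⟩
    · exact ⟨r, hr, m + 1, hi, by
        rw [rhoDesc_eq_mul_rho hi, mul_assoc, mul_assoc, rho_mul_self, mul_one]⟩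
    · obtain ⟨j, rfl⟩ : ∃ j, i = j + 1 := ⟨i - 1, by omega⟩
      refine ⟨r * rho n j, Submonoid.mul_mem _ hr (rho_mem_rhoSubmonoid (by omega)), m, hm, ?_⟩
      rw [mul_assoc, mul_assoc, rho_mul_rhoDesc (by omega) (by omega) hk]

theorem eq_one_of_mem_rhoSubmonoid (φ : STVB n →* Equiv.Perm (Fin n))
    (hr : ∀ i : Fin (n - 1), φ (rhoE n i) = swp i) {k : ℕ} (hk : k ≤ n - 1) {x : STVB n}
    (hx : x ∈ rhoSubmonoid n k) (hφx : φ x = 1) : x = 1 := by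
  induction k generalizing x with
  | zero => simpa [rhoSubmonoid] using hx
  | succ k ih =>
    obtain ⟨r, hr', m, hm, rfl⟩ := exists_mem_rhoSubmonoid_mul_rhoDesc hk hx
    have hrk : φ r ⟨k + 1, by omega⟩ = ⟨k + 1, by omega⟩ :=
      map_apply_eq_self_of_mem_rhoSubmonoid φ hr hr' _ (by simp)
    have hmk : m = k + 1 := by
      have h := congrArg (· ⟨m, by omega⟩) hφx
      simp only [map_mul, Equiv.Perm.mul_apply, map_rhoDesc_apply φ hr hm (by omega), hrk,
        Equiv.Perm.one_apply, Fin.mk.injEq] at h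
      exact h.symm
    subst hmk
    rw [rhoDesc_of_le le_rfl, mul_one] at hφx ⊢
    exact ih (by omega) hr' hφx

end SingTVB

open SingTVB in
theorem stvm_generators_general (n : ℕ) (φ : STVB n →* Equiv.Perm (Fin n))
    (hs : ∀ i : Fin (n - 1), φ (sigE n i) = swp i)
    (hsb : ∀ i : Fin (n - 1), φ (sigbE n i) = swp i)
    (hr : ∀ i : Fin (n - 1), φ (rhoE n i) = swp i)
    (ht : ∀ i : Fin (n - 1), φ (tauE n i) = 1)
    (hg : ∀ j : Fin n, φ (gamE n j) = 1) :
    Submonoid.closure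
      ({x : STVB n | ∃ k l : Fin n, k ≠ l ∧ (x = lam n k l ∨ x = lamBar n k l ∨ x = zel n k l)}
        ∪ Set.range (gamE n)) = MonoidHom.mker φ := by
  have hK : Submonoid.closure (gens n) ≤ MonoidHom.mker φ :=
    closure_gens_le_mker φ hs hsb hr ht hg
  refine le_antisymm hK fun x hx => ?_
  obtain ⟨r, hr', c, hc, rfl⟩ := Set.mem_mul.1 (mem_rhoSubmonoid_mul_closure_gens x)
  have hφr : φ r = 1 := by
    simpa [MonoidHom.mem_mker.1 (hK hc)] using MonoidHom.mem_mker.1 hx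
  rwa [eq_one_of_mem_rhoSubmonoid φ hr le_rfl hr' hφr, one_mul]

open SingTVB in
/-- the submonoid `M n = φ₃⁻¹(1)` of `STVB n` is generated, as a monoid, by
the elements `λ_{k,l}`, `λ̄_{k,l}`, `z_{k,l}` (`k ≠ l`) and the `γ_j`. -/
theorem stvm_generators (n : ℕ) (hn : 2 ≤ n) (φ : STVB n →* Equiv.Perm (Fin n))
    (hs : ∀ i : Fin (n - 1), φ (sigE n i) = swp i)
    (hsb : ∀ i : Fin (n - 1), φ (sigbE n i) = swp i)
    (hr : ∀ i : Fin (n - 1), φ (rhoE n i) = swp i)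
    (ht : ∀ i : Fin (n - 1), φ (tauE n i) = 1)
    (hg : ∀ j : Fin n, φ (gamE n j) = 1) :
    Submonoid.closure
      ({x : STVB n | ∃ k l : Fin n, k ≠ l ∧ (x = lam n k l ∨ x = lamBar n k l ∨ x = zel n k l)}
        ∪ Set.range (gamE n)) = MonoidHom.mker φ :=
  stvm_generators_general n φ hs hsb hr ht hg
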